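/- A globular set X is n-truncated if and only if for every k ≥ n the map X_{k+1} → X_k × X_k, c ↦ (s(c), t(c)), is injective and its image is the diagonal {(x, x) : x ∈ X_k}; that is, if and only if for every k ≥ n every (k+1)-cell of X has equal source and target, and every k-cell x of X is the source (and target) of exactly one (k+1)-cell. -/

import Mathlib

open CategoryTheory CategoryTheory.Limits Opposite

/-- Morphisms of the globe category. -/
inductive GlobeHom : ℕ → ℕ → Type where
  | ident (m : ℕ) : GlobeHom m m
  | sig {m n : ℕ} (h : m < n) : GlobeHom m n
  | tau {m n : ℕ} (h : m < n) : GlobeHom m n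

/-- Composition in the globe category: determined by the inner factor. -/
def GlobeHom.comp : {a b c : ℕ} → GlobeHom a b → GlobeHom b c → GlobeHom a c
  | _, _, _, .ident _, g => g
  | _, _, _, .sig h, .ident _ => .sig h
  | _, _, _, .sig h, .sig h' => .sig (h.trans h')
  | _, _, _, .sig h, .tau h' => .sig (h.trans h')
  | _, _, _, .tau h, .ident _ => .tau h
  | _, _, _, .tau h, .sig h' => .tau (h.trans h')
  | _, _, _, .tau h, .tau h' => .tau (h.trans h')

lemma GlobeHom.comp_assoc : ∀ {a b c d : ℕ} (f : GlobeHom a b) (g : GlobeHom b c)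
    (h : GlobeHom c d), (f.comp g).comp h = f.comp (g.comp h) := by
  intro a b c d f g h
  cases f <;> cases g <;> cases h <;> rfl

lemma GlobeHom.le : ∀ {a b : ℕ}, GlobeHom a b → a ≤ b
  | _, _, .ident _ => le_rfl
  | _, _, .sig h => h.le
  | _, _, .tau h => h.le

/-- The globe category `G`: objects are natural numbers. -/
def Globe : Type := ℕ

instance : Category Globe where
  Hom m n := GlobeHom m n
  id m := GlobeHom.ident m
  comp f g := f.comp g
  id_comp _ := rfl
  comp_id := by rintro _ _ (_|_|_) <;> rfl
  assoc f g h := GlobeHom.comp_assoc f g h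

/-- The object of `Globe` corresponding to `k : ℕ`. -/
def gl (k : ℕ) : Globe := k

/-- The underlying natural number of an object of `Globe`. -/
def gval (m : Globe) : ℕ := m

/-- Globular sets: presheaves on the globe category. -/
abbrev GlobSet := Globeᵒᵖ ⥤ Type

/-- The source map `X_{k+1} → X_k` of a globular set. -/
def gsrc (X : GlobSet) (k : ℕ) : X.obj (op (gl (k+1))) → X.obj (op (gl k)) :=
  X.map (Quiver.Hom.op (show gl k ⟶ gl (k+1) from GlobeHom.sig (Nat.lt_succ_self k)))

/-- The target map `X_{k+1} → X_k` of a globular set. -/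
def gtgt (X : GlobSet) (k : ℕ) : X.obj (op (gl (k+1))) → X.obj (op (gl k)) :=
  X.map (Quiver.Hom.op (show gl k ⟶ gl (k+1) from GlobeHom.tau (Nat.lt_succ_self k)))

/-- Two `k`-cells are parallel if `k = 0` or they have the same source and target. -/
def Parallel (X : GlobSet) : (k : ℕ) → X.obj (op (gl k)) → X.obj (op (gl k)) → Prop
  | 0, _, _ => True
  | (k+1), x, y => gsrc X k x = gsrc X k y ∧ gtgt X k x = gtgt X k y

/-- The full subcategory `G_n` of the globe category on objects `≤ n`. -/
def GlobeLE (n : ℕ) := ObjectProperty.FullSubcategory (fun m : Globe => gval m ≤ n)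

instance (n : ℕ) : Category (GlobeLE n) := ObjectProperty.FullSubcategory.category _

/-- The inclusion `ι_n : G_n ⥤ G`. -/
def iotaGlobe (n : ℕ) : GlobeLE n ⥤ Globe := ObjectProperty.ι _

/-- A morphism of globes coming from an equality of dimensions. -/
def GlobeHom.ofEq : {a b : ℕ} → a = b → GlobeHom a b
  | _, _, rfl => .ident _

/-- A tag distinguishing the three kinds of globe morphisms. -/
def GlobeHom.tag : {a b : ℕ} → GlobeHom a b → ℕ
  | _, _, .ident _ => 0
  | _, _, .sig _ => 1
  | _, _, .tau _ => 2

lemma GlobeHom.ext_tag : ∀ {a b : ℕ} (f g : GlobeHom a b), f.tag = g.tag → f = g := by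
  intro a b f g h
  cases f <;> cases g <;> simp_all [GlobeHom.tag]

lemma GlobeHom.tag_comp : ∀ {a b c : ℕ} (f : GlobeHom a b) (g : GlobeHom b c),
    (f.comp g).tag = if f.tag = 0 then g.tag else f.tag := by
  intro a b c f g
  cases f <;> cases g <;> simp [GlobeHom.comp, GlobeHom.tag]

lemma GlobeHom.tag_ofEq {a b : ℕ} (h : a = b) : (GlobeHom.ofEq h).tag = 0 := by
  cases h; rfl

/-- The truncation of a globe morphism. -/
def GlobeHom.trunc (n : ℕ) : {a b : ℕ} → GlobeHom a b → GlobeHom (min a n) (min b n)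
  | _, _, .ident m => .ident _
  | a, b, .sig h => if h' : min a n < min b n then .sig h' else .ofEq (by omega)
  | a, b, .tau h => if h' : min a n < min b n then .tau h' else .ofEq (by omega)

lemma GlobeHom.tag_trunc (n : ℕ) : ∀ {a b : ℕ} (f : GlobeHom a b),
    (f.trunc n).tag = if min a n < min b n then f.tag else 0 := by
  intro a b f
  cases f with
  | ident => simp [GlobeHom.trunc, GlobeHom.tag]
  | sig h =>
      rw [GlobeHom.trunc]
      split
      · simp_all [GlobeHom.tag]
      · rw [GlobeHom.tag_ofEq]
  | tau h =>
      rw [GlobeHom.trunc]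
      split
      · simp_all [GlobeHom.tag]
      · rw [GlobeHom.tag_ofEq]

/-- The truncation functor `t_n : G ⥤ G_n`. -/
def truncFunctor (n : ℕ) : Globe ⥤ GlobeLE n where
  obj k := ⟨gl (min (gval k) n), min_le_right _ _⟩
  map {a b} f := ObjectProperty.homMk (GlobeHom.trunc n f)
  map_id _ := rfl
  map_comp {a b c} f g := by
    apply ObjectProperty.hom_ext
    apply GlobeHom.ext_tag
    revert f g
    intro (f : GlobeHom (gval a) (gval b)) (g : GlobeHom (gval b) (gval c))
    have hab := GlobeHom.le f
    have hbc := GlobeHom.le g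
    show ((GlobeHom.comp (a := gval a) (b := gval b) (c := gval c) f g).trunc n).tag =
      ((GlobeHom.trunc n (a := gval a) (b := gval b) f).comp
        (GlobeHom.trunc n (a := gval b) (b := gval c) g)).tag
    rw [GlobeHom.tag_trunc, GlobeHom.tag_comp, GlobeHom.tag_comp, GlobeHom.tag_trunc,
      GlobeHom.tag_trunc]
    cases f <;> cases g <;> simp [GlobeHom.tag] <;> split_ifs <;> omega

/-- The precomposition functor `t_n^*`. -/
def tStar (n : ℕ) : ((GlobeLE n)ᵒᵖ ⥤ Type) ⥤ GlobSet :=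
  (Functor.whiskeringLeft _ _ _).obj (truncFunctor n).op

/-- The left Kan extension functor `t_{n!}`, left adjoint of `t_n^*`. -/
noncomputable def tLan (n : ℕ) : GlobSet ⥤ ((GlobeLE n)ᵒᵖ ⥤ Type) :=
  (truncFunctor n).op.lan

/-- The adjunction `t_{n!} ⊣ t_n^*`. -/
noncomputable def tAdj (n : ℕ) : tLan n ⊣ tStar n :=
  Functor.lanAdjunction _ _

/-- A globular set is `n`-truncated if the unit of `t_{n!} ⊣ t_n^*` is an isomorphism at it. -/
def IsTruncated (n : ℕ) (X : GlobSet) : Prop := IsIso ((tAdj n).unit.app X)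

/-- The restriction functor `ι_n^*`. -/
def iotaStar (n : ℕ) : GlobSet ⥤ ((GlobeLE n)ᵒᵖ ⥤ Type) :=
  (Functor.whiskeringLeft _ _ _).obj (iotaGlobe n).op

/-- The right Kan extension functor `ι_{n*}`, right adjoint of `ι_n^*`. -/
noncomputable def iotaRan (n : ℕ) : ((GlobeLE n)ᵒᵖ ⥤ Type) ⥤ GlobSet :=
  (iotaGlobe n).op.ran

/-- The adjunction `ι_n^* ⊣ ι_{n*}`. -/
noncomputable def iotaAdj (n : ℕ) : iotaStar n ⊣ iotaRan n :=
  Functor.ranAdjunction _ _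

/-- A globular set is `n`-coskeletal if the unit of `ι_n^* ⊣ ι_{n*}` is an isomorphism at it. -/
def IsCoskeletal (n : ℕ) (X : GlobSet) : Prop := IsIso ((iotaAdj n).unit.app X)

/-- The representable globular set `D_k`. -/
def disk (k : ℕ) : GlobSet := yoneda.obj (gl k)

/-- The boundary `∂D_k` of the `k`-disk. -/
def boundary (k : ℕ) : GlobSet where
  obj m := { f : GlobeHom (gval m.unop) k // gval m.unop < k }
  map {m m'} g := TypeCat.ofHom fun f =>
    ⟨GlobeHom.comp g.unop f.1, lt_of_le_of_lt (GlobeHom.le g.unop) f.2⟩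
  map_id m := by ext f; rfl
  map_comp {m m' m''} g h := by
    ext f; exact GlobeHom.comp_assoc h.unop g.unop f.1

/-- The boundary inclusion `∂D_k ⟶ D_k`. -/
def boundaryIncl (k : ℕ) : boundary k ⟶ disk k where
  app m := TypeCat.ofHom fun f => f.1
  naturality m m' g := by ext f; rfl

/-!
`t_n^*` is fully faithful: `t_n` restricts to the identity on `G_n`, and a natural transformation
between presheaves of the form `Y ∘ t_n` is determined by its components at levels `≤ n`. Hence
the unit is invertible at `X` exactly when `X ≅ t_n^* Y` for some `Y`. Such a presheaf has `s = t`
bijective above `n`, because `t_n` collapses every map between levels `≥ n` to an identity.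
Conversely, if `s = t` is bijective above `n`, then every map out of a level `≥ n` acts on `X` by a
bijection depending only on its endpoints, and the maps `X(min k n → k)` assemble into an
isomorphism `X ≅ t_n^* ι_n^* X`.
-/

theorem pair_injective_and_range_eq_diagonal_iff {α β : Type*} (s t : α → β) :
    (Function.Injective (fun c => (s c, t c)) ∧
        Set.range (fun c => (s c, t c)) = {p : β × β | p.1 = p.2}) ↔
      s = t ∧ Function.Bijective s := by
  constructor
  · rintro ⟨hinj, hran⟩
    obtain rfl : s = t := funext fun c =>
      (hran ▸ Set.mem_range_self c : (s c, t c) ∈ {p : β × β | p.1 = p.2})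
    refine ⟨rfl, fun c c' h => hinj (by simp only [h]), fun x => ?_⟩
    obtain ⟨c, hc⟩ : (x, x) ∈ Set.range fun c => (s c, s c) := hran ▸ rfl
    exact ⟨c, congrArg Prod.fst hc⟩
  · rintro ⟨rfl, hinj, hsurj⟩
    refine ⟨fun c c' h => hinj (congrArg Prod.fst h), Set.ext fun ⟨x, y⟩ => ⟨?_, ?_⟩⟩
    · rintro ⟨c, hc⟩
      simp only [Prod.mk.injEq] at hc
      exact hc.1.symm.trans hc.2
    · rintro (rfl : x = y)
      obtain ⟨c, rfl⟩ := hsurj x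
      exact ⟨c, rfl⟩

lemma GlobeHom.eq_ofEq : ∀ {a b : ℕ} (h : a = b) (f : GlobeHom a b), f = GlobeHom.ofEq h := by
  rintro a _ rfl (_ | h | h)
  · rfl
  all_goals exact absurd h (lt_irrefl a)

lemma GlobeHom.tag_eq_zero_iff {a b : ℕ} (f : GlobeHom a b) : f.tag = 0 ↔ a = b := by
  cases f <;> simp_all [GlobeHom.tag, Nat.ne_of_lt]

lemma GlobeHom.tag_trunc_eq {n a b : ℕ} (f : GlobeHom a b) (h : a < n ∨ b ≤ n) :
    (f.trunc n).tag = f.tag := by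
  rw [GlobeHom.tag_trunc]
  split_ifs with hlt
  · rfl
  · exact ((f.tag_eq_zero_iff).mpr (by have := f.le; omega)).symm

lemma GlobeLE.ext {n : ℕ} {p q : GlobeLE n} (h : p.obj = q.obj) : p = q := by
  cases p; cases q; cases h; rfl

lemma GlobeLE.hom_eq_eqToHom {n : ℕ} {p q : GlobeLE n} (h : p = q) (f : p ⟶ q) :
    f = eqToHom h := by
  subst h
  exact ObjectProperty.hom_ext _ (GlobeHom.eq_ofEq rfl f.hom)

lemma GlobeLE.hom_ext_tag {n : ℕ} {p q : GlobeLE n} {f g : p ⟶ q}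
    (h : GlobeHom.tag (a := gval p.obj) (b := gval q.obj) f.hom = GlobeHom.tag g.hom) : f = g :=
  ObjectProperty.hom_ext _ (GlobeHom.ext_tag _ _ h)

lemma GlobeLE.tag_eqToHom_comp_comp_eqToHom {n : ℕ} {p p' q q' : GlobeLE n} (hp : p = p')
    (hq : q' = q) (f : p' ⟶ q') :
    GlobeHom.tag (a := gval p.obj) (b := gval q.obj) (eqToHom hp ≫ f ≫ eqToHom hq).hom =
      GlobeHom.tag (a := gval p'.obj) (b := gval q'.obj) f.hom := by
  subst hp hq
  simp

lemma iotaGlobe_comp_truncFunctor (n : ℕ) : iotaGlobe n ⋙ truncFunctor n = 𝟭 (GlobeLE n) := by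
  refine CategoryTheory.Functor.ext (fun p => GlobeLE.ext (min_eq_left p.property)) fun p q f => ?_
  apply GlobeLE.hom_ext_tag
  exact (GlobeHom.tag_trunc_eq (a := gval p.obj) (b := gval q.obj) f.hom (.inr q.property)).trans
    (GlobeLE.tag_eqToHom_comp_comp_eqToHom _ _ f).symm

def fromTrunc (n k : ℕ) : gl (min k n) ⟶ gl k :=
  if h : min k n < k then GlobeHom.sig h else GlobeHom.ofEq (show min k n = k by omega)

/- The bound `a < n` is needed: `t_n` sends `tau : n → n+1` to an identity, while
`fromTrunc n (n+1)` is `sig`. -/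
lemma fromTrunc_comp {n a b : ℕ} (ha : a < n) (u : gl a ⟶ gl b) :
    fromTrunc n a ≫ u = ((truncFunctor n).map u).hom ≫ fromTrunc n b := by
  have hzero : ∀ k, k < n → GlobeHom.tag (a := min k n) (b := k) (fromTrunc n k) = 0 :=
    fun k hk => (GlobeHom.tag_eq_zero_iff _).mpr (by omega)
  apply GlobeHom.ext_tag
  refine (GlobeHom.tag_comp (a := min a n) (b := a) (c := b) (fromTrunc n a) u).trans
    (Eq.trans ?_ (GlobeHom.tag_comp (a := min a n) (b := min b n) (c := b)
      (GlobeHom.trunc n u) (fromTrunc n b)).symm)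
  have htrunc : GlobeHom.tag (a := min a n) (b := min b n) (GlobeHom.trunc n u) =
      GlobeHom.tag (a := a) (b := b) u :=
    GlobeHom.tag_trunc_eq (a := a) (b := b) u (.inl ha)
  simp only [htrunc, hzero a ha, if_true]
  split_ifs with hu
  · have hab : a = b := (GlobeHom.tag_eq_zero_iff u).mp hu
    exact hu.trans (hzero b (hab ▸ ha)).symm
  · rfl

lemma truncFunctor_obj_min (n k : ℕ) :
    (truncFunctor n).obj (gl (min k n)) = (truncFunctor n).obj (gl k) :=
  GlobeLE.ext (show min (min k n) n = min k n by omega)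

lemma tStar_obj_map_fromTrunc {n : ℕ} (Y : (GlobeLE n)ᵒᵖ ⥤ Type) (k : ℕ)
    (h : ((tStar n).obj Y).obj (op (gl k)) = ((tStar n).obj Y).obj (op (gl (min k n)))) :
    ((tStar n).obj Y).map (fromTrunc n k).op = eqToHom h := by
  change Y.map ((truncFunctor n).map (fromTrunc n k)).op = _
  rw [GlobeLE.hom_eq_eqToHom (truncFunctor_obj_min n k) ((truncFunctor n).map _), eqToHom_op,
    eqToHom_map]
  rfl

lemma tStar_map_app_eq {n : ℕ} {Y Y' : (GlobeLE n)ᵒᵖ ⥤ Type}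
    (α : (tStar n).obj Y ⟶ (tStar n).obj Y') (k : ℕ)
    (h : ((tStar n).obj Y).obj (op (gl k)) = ((tStar n).obj Y).obj (op (gl (min k n))))
    (h' : ((tStar n).obj Y').obj (op (gl (min k n))) = ((tStar n).obj Y').obj (op (gl k))) :
    α.app (op (gl k)) = eqToHom h ≫ α.app (op (gl (min k n))) ≫ eqToHom h' := by
  have hα := α.naturality (fromTrunc n k).op
  rw [tStar_obj_map_fromTrunc Y k h, tStar_obj_map_fromTrunc Y' k h'.symm] at hα
  rw [← Category.assoc, hα, Category.assoc, eqToHom_trans, eqToHom_refl, Category.comp_id]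

instance (n : ℕ) : (tStar n).Faithful where
  map_injective {Y Y'} {β β'} h := by
    ext1; funext p
    have hp : op ((truncFunctor n).obj (gl (gval p.unop.obj))) = p :=
      congrArg op (GlobeLE.ext (min_eq_left p.unop.property))
    rw [← hp]
    exact congrArg (fun γ => γ.app (op (gl (gval p.unop.obj)))) h

lemma iotaStar_obj_tStar_obj (n : ℕ) (Y : (GlobeLE n)ᵒᵖ ⥤ Type) :
    (iotaStar n).obj ((tStar n).obj Y) = Y := by
  change (iotaGlobe n ⋙ truncFunctor n).op ⋙ Y = Y
  rw [iotaGlobe_comp_truncFunctor]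
  rfl

instance (n : ℕ) : (tStar n).Full where
  map_surjective {Y Y'} α := by
    refine ⟨eqToHom (iotaStar_obj_tStar_obj n Y).symm ≫ (iotaStar n).map α ≫
      eqToHom (iotaStar_obj_tStar_obj n Y'), ?_⟩
    ext1; funext k
    change (eqToHom _ ≫ (iotaStar n).map α ≫ eqToHom _).app ((truncFunctor n).op.obj k) = _
    rw [NatTrans.comp_app, NatTrans.comp_app, eqToHom_app, eqToHom_app]
    exact (tStar_map_app_eq α (gval k.unop) _ _).symm

def IsTrivialAbove (n : ℕ) (X : GlobSet) : Prop :=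
  ∀ k, n ≤ k → gsrc X k = gtgt X k ∧ Function.Bijective (gsrc X k)

lemma isTrivialAbove_tStar_obj (n : ℕ) (Y : (GlobeLE n)ᵒᵖ ⥤ Type) :
    IsTrivialAbove n ((tStar n).obj Y) := by
  intro k hk
  have hE : (truncFunctor n).obj (gl k) = (truncFunctor n).obj (gl (k+1)) :=
    GlobeLE.ext (show min k n = min (k+1) n by omega)
  have hs : gsrc ((tStar n).obj Y) k = Y.map (eqToHom hE).op := by
    change ⇑(Y.map ((truncFunctor n).map _).op) = _
    rw [GlobeLE.hom_eq_eqToHom hE ((truncFunctor n).map _)]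
  have ht : gtgt ((tStar n).obj Y) k = Y.map (eqToHom hE).op := by
    change ⇑(Y.map ((truncFunctor n).map _).op) = _
    rw [GlobeLE.hom_eq_eqToHom hE ((truncFunctor n).map _)]
  refine ⟨hs.trans ht.symm, ?_⟩
  rw [hs, eqToHom_op, eqToHom_map]
  exact (isIso_iff_bijective _).mp inferInstance

lemma gsrc_naturality {X X' : GlobSet} (f : X ⟶ X') (k : ℕ) (c : X.obj (op (gl (k+1)))) :
    f.app (op (gl k)) (gsrc X k c) = gsrc X' k (f.app (op (gl (k+1))) c) :=
  NatTrans.naturality_apply f _ c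

lemma gtgt_naturality {X X' : GlobSet} (f : X ⟶ X') (k : ℕ) (c : X.obj (op (gl (k+1)))) :
    f.app (op (gl k)) (gtgt X k c) = gtgt X' k (f.app (op (gl (k+1))) c) :=
  NatTrans.naturality_apply f _ c

lemma IsTrivialAbove.of_iso {n : ℕ} {X X' : GlobSet} (h : IsTrivialAbove n X) (e : X ≅ X') :
    IsTrivialAbove n X' := by
  intro k hk
  obtain ⟨hst, hbij⟩ := h k hk
  have hs : gsrc X' k = e.hom.app _ ∘ gsrc X k ∘ e.inv.app _ := by
    funext c; simp only [Function.comp_apply, gsrc_naturality, Iso.inv_hom_id_app_apply]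
  have ht : gtgt X' k = e.hom.app _ ∘ gtgt X k ∘ e.inv.app _ := by
    funext c; simp only [Function.comp_apply, gtgt_naturality, Iso.inv_hom_id_app_apply]
  refine ⟨by rw [hs, ht, hst], ?_⟩
  rw [hs]
  exact ((isIso_iff_bijective _).mp inferInstance).comp
    (hbij.comp ((isIso_iff_bijective _).mp inferInstance))

abbrev globeSig {a b : ℕ} (h : a < b) : gl a ⟶ gl b := GlobeHom.sig h

abbrev globeTau {a b : ℕ} (h : a < b) : gl a ⟶ gl b := GlobeHom.tau h

lemma map_globeSig_succ (X : GlobSet) {a b : ℕ} (hab : a < b) :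
    X.map (globeSig (hab.trans b.lt_succ_self)).op =
      X.map (globeSig b.lt_succ_self).op ≫ X.map (globeSig hab).op :=
  X.map_comp (globeSig b.lt_succ_self).op (globeSig hab).op

lemma map_globeTau_succ (X : GlobSet) {a b : ℕ} (hab : a < b) :
    X.map (globeTau (hab.trans b.lt_succ_self)).op =
      X.map (globeSig b.lt_succ_self).op ≫ X.map (globeTau hab).op :=
  X.map_comp (globeSig b.lt_succ_self).op (globeTau hab).op

lemma bijective_map_of_eq (X : GlobSet) {a b : ℕ} (hab : a = b) (f : gl a ⟶ gl b) :
    Function.Bijective (X.map f.op) := by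
  subst hab
  rw [GlobeHom.eq_ofEq rfl f]
  change Function.Bijective (X.map (𝟙 (op (gl a))))
  rw [X.map_id]
  exact Function.bijective_id

namespace IsTrivialAbove

variable {n : ℕ} {X : GlobSet}

lemma map_globeSig_eq_map_globeTau_and_bijective (h : IsTrivialAbove n X) {a b : ℕ} (ha : n ≤ a)
    (hab : a < b) :
    X.map (globeSig hab).op = X.map (globeTau hab).op ∧
      Function.Bijective (X.map (globeSig hab).op) := by
  induction b, hab using Nat.le_induction with
  | base => exact ⟨ConcreteCategory.coe_ext (h a ha).1, (h a ha).2⟩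
  | succ b hab ih =>
    rw [map_globeSig_succ X hab, map_globeTau_succ X hab, ih.1]
    exact ⟨rfl, (ih.1 ▸ ih.2).comp (h b (by omega)).2⟩

lemma map_eq (h : IsTrivialAbove n X) {a b : ℕ} (ha : n ≤ a) (f g : gl a ⟶ gl b) :
    X.map f.op = X.map g.op := by
  rcases (GlobeHom.le f).lt_or_eq with hab | rfl
  · have hsig : ∀ f' : gl a ⟶ gl b, X.map f'.op = X.map (globeSig hab).op := by
      rintro (_ | _ | hab')
      · exact absurd hab (lt_irrefl a)
      · rfl
      · exact (map_globeSig_eq_map_globeTau_and_bijective h ha hab').1.symm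
    rw [hsig f, hsig g]
  · rw [GlobeHom.eq_ofEq rfl f, GlobeHom.eq_ofEq rfl g]

lemma bijective_map (h : IsTrivialAbove n X) {a b : ℕ} (ha : n ≤ a) (f : gl a ⟶ gl b) :
    Function.Bijective (X.map f.op) := by
  rcases (GlobeHom.le f).lt_or_eq with hab | rfl
  · rw [map_eq h ha f (globeSig hab)]
    exact (map_globeSig_eq_map_globeTau_and_bijective h ha hab).2
  · exact bijective_map_of_eq X rfl f

def toTStarIotaStar (h : IsTrivialAbove n X) : X ⟶ (tStar n).obj ((iotaStar n).obj X) where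
  app k := X.map (fromTrunc n (gval k.unop)).op
  naturality k k' u := by
    have hl : X.map (fromTrunc n (gval k'.unop) ≫ u.unop).op =
        X.map u ≫ X.map (fromTrunc n (gval k'.unop)).op :=
      X.map_comp _ _
    have hr : X.map (((truncFunctor n).map u.unop).hom ≫ fromTrunc n (gval k.unop)).op =
        X.map (fromTrunc n (gval k.unop)).op ≫ ((tStar n).obj ((iotaStar n).obj X)).map u :=
      X.map_comp _ _
    refine hl.symm.trans (Eq.trans ?_ hr)
    by_cases hk' : n ≤ gval k'.unop
    · exact map_eq h (show n ≤ min (gval k'.unop) n by omega) _ _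
    · exact congrArg (fun f => X.map (Quiver.Hom.op f))
        (fromTrunc_comp (show gval k'.unop < n by omega) u.unop)

lemma mem_essImage (h : IsTrivialAbove n X) : (tStar n).essImage X := by
  have : ∀ k, IsIso ((toTStarIotaStar h).app k) := by
    intro k
    rw [isIso_iff_bijective]
    by_cases hk : n ≤ gval k.unop
    · exact bijective_map h (show n ≤ min (gval k.unop) n by omega) _
    · exact bijective_map_of_eq X (show min (gval k.unop) n = gval k.unop by omega) _
  have : IsIso (toTStarIotaStar h) := NatIso.isIso_of_isIso_app _
  exact ⟨_, ⟨(asIso (toTStarIotaStar h)).symm⟩⟩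

end IsTrivialAbove

lemma isTruncated_iff_isTrivialAbove (n : ℕ) (X : GlobSet) :
    IsTruncated n X ↔ IsTrivialAbove n X := by
  rw [IsTruncated, (tAdj n).isIso_unit_app_iff_mem_essImage]
  exact ⟨fun ⟨Y, ⟨e⟩⟩ => IsTrivialAbove.of_iso (isTrivialAbove_tStar_obj n Y) e,
    IsTrivialAbove.mem_essImage⟩

/-- A globular set is `n`-truncated iff for every `k ≥ n` the map
`X_{k+1} → X_k × X_k, c ↦ (s c, t c)` is injective with image the diagonal. -/
theorem statement2 (n : ℕ) (X : GlobSet) :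
    IsTruncated n X ↔
      ∀ k : ℕ, n ≤ k →
        Function.Injective (fun c : X.obj (op (gl (k+1))) => (gsrc X k c, gtgt X k c)) ∧
        Set.range (fun c : X.obj (op (gl (k+1))) => (gsrc X k c, gtgt X k c)) =
          {p : X.obj (op (gl k)) × X.obj (op (gl k)) | p.1 = p.2} := by
  rw [isTruncated_iff_isTrivialAbove]
  exact forall₂_congr fun k _ => (pair_injective_and_range_eq_diagonal_iff _ _).symm
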